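/- Let P be a reducible VASS with variables x_1,…,x_n whose control flow graph is a single strongly connected component with a unique entry location l_0 that is also its unique exit point. Let π be a loop-path of P with contracted update c_π and suppose there is a variable index j and an integer k > 0 such that c_π(j) = −k and c_{π'}(j) ≤ 0 for every loop-path π' of P. Then for every finite trace of P starting at (l_0, σ_0) and ending at location l_0, the underlying path contains at most σ_0(x_j)/k instances of π. -/

import Mathlib

open scoped BigOperators

/-- Update vectors in `ℤⁿ`. -/
abbrev Upd (n : ℕ) := Fin n → ℤ

/-- Valuations of the variables (values are natural numbers). -/
abbrev Valu (n : ℕ) := Fin n → ℕ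

/-- An edge (transition) of a VASS: source location, update vector, target location. -/
abbrev VEdge (n : ℕ) (L : Type*) := L × Upd n × L

/-- A lossy vector addition system with states over `n` variables and locations `L`. -/
structure VASS (n : ℕ) (L : Type*) where
  E : Set (VEdge n L)

namespace VASS

variable {n : ℕ} {L : Type*}

/-- `FPath P a p b`: the list of edges `p` is a finite path of `P` from `a` to `b`. -/
inductive FPath (P : VASS n L) : L → List (VEdge n L) → L → Prop
  | nil (a : L) : FPath P a [] a
  | cons {a b c : L} {d : Upd n} {p : List (VEdge n L)} :
      (a, d, b) ∈ P.E → FPath P b p c → FPath P a ((a, d, b) :: p) c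

/-- `x` occurs among the locations of the path `p` starting at location `a`. -/
def Visits (a : L) (p : List (VEdge n L)) (x : L) : Prop :=
  x = a ∨ ∃ e ∈ p, e.2.2 = x

/-- `a` dominates `b` (w.r.t. the entry location):
every path from the entry to `b` includes `a`. -/
def Dominates (P : VASS n L) (entry a b : L) : Prop :=
  ∀ p : List (VEdge n L), P.FPath entry p b → Visits entry p a

/-- An edge `l₁ → l₂` is a back edge if `l₂` dominates `l₁`. -/
def BackEdge (P : VASS n L) (entry : L) (e : VEdge n L) : Prop :=
  e ∈ P.E ∧ P.Dominates entry e.2.2 e.1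

/-- All locations are reachable from the entry location. -/
def EntryReach (P : VASS n L) (entry : L) : Prop :=
  ∀ x : L, ∃ p, P.FPath entry p x

/-- `P` is reducible: the graph becomes acyclic after removing all back edges. -/
def Reducible (P : VASS n L) (entry : L) : Prop :=
  ∀ (a : L) (p : List (VEdge n L)), (∀ e ∈ p, ¬ P.BackEdge entry e) → P.FPath a p a → p = []

/-- `h` is a loop header: the target of some back edge. -/
def LoopHeader (P : VASS n L) (entry h : L) : Prop :=
  ∃ e, P.BackEdge entry e ∧ e.2.2 = h

/-- The natural loop of the loop header `h`: all locations `x` dominated by `h` such that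
there is a back edge `m → h` and a path from `x` to `m` that does not contain `h`. -/
def NaturalLoop (P : VASS n L) (entry h : L) : Set L :=
  {x | P.Dominates entry h x ∧ ∃ e, P.BackEdge entry e ∧ e.2.2 = h ∧
    ∃ p, P.FPath x p e.1 ∧ ∀ e' ∈ p, e'.2.2 ≠ h}

/-- `p` is a loop-path at loop header `l`: a simple cyclic path starting and ending at `l`
that visits only locations inside the natural loop of `l`. -/
def LoopPath (P : VASS n L) (entry l : L) (p : List (VEdge n L)) : Prop :=
  P.LoopHeader entry l ∧ P.FPath l p l ∧ p ≠ [] ∧ (p.map Prod.fst).Nodup ∧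
    ∀ x, Visits l p x → x ∈ P.NaturalLoop entry l

/-- The contracted update of a path: the sum of the update vectors along the path. -/
def contractUpd (p : List (VEdge n L)) : Upd n :=
  (p.map (fun e => e.2.1)).sum

/-- Control flow abstraction: the transition system containing the contracted update
of every loop-path of `P`. -/
def CFA (P : VASS n L) (entry : L) : Set (Upd n) :=
  {c | ∃ l p, P.LoopPath entry l p ∧ c = contractUpd p}

/-- `InstanceAux P h π ν D`: `ν` is an instance of the loop-path `π` (whose header is `h`),
interleaving the designated transitions of `π` with cyclic filler paths avoiding `h`;
`D` is the set of positions in `ν` of the designated transitions of `π`. -/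
inductive InstanceAux (P : VASS n L) (h : L) :
    List (VEdge n L) → List (VEdge n L) → Set ℕ → Prop
  | single (e : VEdge n L) : InstanceAux P h [e] [e] {0}
  | cons (e : VEdge n L) (q rest ν : List (VEdge n L)) (D : Set ℕ) :
      P.FPath e.2.2 q e.2.2 → e.2.2 ≠ h → (∀ e' ∈ q, e'.2.2 ≠ h) →
      InstanceAux P h rest ν D →
      InstanceAux P h (e :: rest) (e :: (q ++ ν)) (insert 0 ((fun m => m + q.length + 1) '' D))

/-- `ν` is an instance of the loop-path `π`, with `D` the positions of the
designated transitions of `π` inside `ν`. -/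
def IsInstance (P : VASS n L) (π ν : List (VEdge n L)) (D : Set ℕ) : Prop :=
  ∃ e rest, π = e :: rest ∧ P.InstanceAux e.1 π ν D

/-- The path `p` contains an instance of `π` starting at position `i` and of length `k`. -/
def InstanceAt (P : VASS n L) (π p : List (VEdge n L)) (i k : ℕ) : Prop :=
  i + k ≤ p.length ∧ 1 ≤ k ∧ ∃ D, P.IsInstance π ((p.drop i).take k) D

/-- The number of instances of the loop-path `π` contained in the path `p`. -/
noncomputable def numInstances (P : VASS n L) (π p : List (VEdge n L)) : ℕ :=
  {q : ℕ × ℕ | P.InstanceAt π p q.1 q.2}.ncard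

/-- The transition occurrence at position `t` of the path `p` belongs to the instance of
the loop-path `π` contained in `p` at position `i` with length `k` (i.e. `t` is one of the
designated transitions of that instance). -/
def BelongsAt (P : VASS n L) (π p : List (VEdge n L)) (i k t : ℕ) : Prop :=
  i + k ≤ p.length ∧ 1 ≤ k ∧ i ≤ t ∧ t < i + k ∧
    ∃ D, P.IsInstance π ((p.drop i).take k) D ∧ (t - i) ∈ D

/-- An infinite trace of the VASS `P`. -/
def InfTrace (P : VASS n L) (locs : ℕ → L) (upds : ℕ → Upd n) (vals : ℕ → Valu n) : Prop :=
  ∀ i, (locs i, upds i, locs (i+1)) ∈ P.E ∧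
    ∀ j, (vals (i+1) j : ℤ) ≤ (vals i j : ℤ) + upds i j

/-- `P` is terminating: it has no infinite trace. -/
def Terminating (P : VASS n L) : Prop :=
  ¬ ∃ locs upds vals, P.InfTrace locs upds vals

/-- The valuations `vals` form a trace of `P` along the finite path `p`. -/
def FinTraceVals (P : VASS n L) (p : List (VEdge n L)) (vals : ℕ → Valu n) : Prop :=
  ∀ (i : ℕ) (hi : i < p.length), ∀ j,
    (vals (i+1) j : ℤ) ≤ (vals i j : ℤ) + (p.get ⟨i, hi⟩).2.1 j

end VASS

/-- An enumeration `τ₁,…,τ_k` of the transition system `T` together with variables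
`y₁,…,y_k` satisfies the ranking condition of the `Ranking` algorithm:
`τᵢ ⊨ yᵢ' < yᵢ`, and `τⱼ ⊨ yᵢ' ≤ yᵢ` for all `j ≥ i`. -/
def RankingCondition {n : ℕ} (T : Set (Upd n)) {k : ℕ}
    (τ : Fin k → Upd n) (y : Fin k → Fin n) : Prop :=
  Function.Injective τ ∧ Set.range τ = T ∧
    (∀ i, τ i (y i) < 0) ∧ ∀ i j : Fin k, i ≤ j → τ j (y i) ≤ 0

/-- An infinite lossy execution of the transition system `T`. -/
def LossyExec {n : ℕ} (T : Set (Upd n)) (v : ℕ → Valu n) (d : ℕ → Upd n) : Prop :=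
  ∀ m, d m ∈ T ∧ ∀ j, (v (m+1) j : ℤ) ≤ (v m j : ℤ) + d m j

/-- A finite lossy execution `v 0, …, v N` of the transition system `T`. -/
def FinLossyExec {n : ℕ} (T : Set (Upd n)) (N : ℕ) (v : ℕ → Valu n) (d : ℕ → Upd n) : Prop :=
  ∀ m < N, d m ∈ T ∧ ∀ j, (v (m+1) j : ℤ) ≤ (v m j : ℤ) + d m j

/-!
A cycle of a reducible VASS is assembled from loop-paths, so if no loop-path increases `x_j`,
no cycle does. An instance of `π` is `π` with cycles spliced in, so it decreases `x_j` by at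
least `k`. Cutting the first instance out of a cycle and closing up the remainder into a
shorter cycle at the header shows, by induction, that a cycle containing `N` instances changes
`x_j` by at most `-k N`. Along a trace starting at `σ0` the value of `x_j` stays nonnegative,
so `k N ≤ σ0(x_j)`.
-/

namespace VASS

variable {n : ℕ} {L : Type*} {P : VASS n L}

section Paths

variable {a b c : L} {p q : List (VEdge n L)}

lemma FPath.append (hp : P.FPath a p b) (hq : P.FPath b q c) : P.FPath a (p ++ q) c := by
  induction hp with
  | nil => exact hq
  | cons he _ ih => exact .cons he (ih hq)

lemma FPath.of_append (h : P.FPath a (p ++ q) c) : ∃ b, P.FPath a p b ∧ P.FPath b q c := by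
  induction p generalizing a with
  | nil => exact ⟨a, .nil a, h⟩
  | cons e p ih =>
    cases h with
    | cons he h' =>
      obtain ⟨b, h1, h2⟩ := ih h'
      exact ⟨b, .cons he h1, h2⟩

lemma FPath.of_cons {e : VEdge n L} (h : P.FPath a (e :: p) b) :
    e.1 = a ∧ e ∈ P.E ∧ P.FPath e.2.2 p b := by
  cases h with
  | cons he h' => exact ⟨rfl, he, h'⟩

lemma FPath.singleton {e : VEdge n L} (he : e ∈ P.E) : P.FPath e.1 [e] e.2.2 :=
  .cons he (.nil _)

lemma FPath.getLast_snd_snd (h : P.FPath a p b) (hp : p ≠ []) : (p.getLast hp).2.2 = b := by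
  induction h with
  | nil => contradiction
  | cons _ h' ih =>
    cases h' with
    | nil => rfl
    | cons _ _ => simp only [List.getLast_cons_cons]; exact ih (List.cons_ne_nil _ _)

lemma FPath.map_fst (h : P.FPath a p b) (hp : p ≠ []) :
    p.map Prod.fst = a :: p.dropLast.map (·.2.2) := by
  induction h with
  | nil => contradiction
  | cons _ h' ih =>
    cases h' with
    | nil => rfl
    | cons _ _ =>
      rw [List.map_cons, ih (List.cons_ne_nil _ _)]
      simp

lemma FPath.snd_snd_ne_of_nodup (h : P.FPath a p b) (hp : p ≠ [])
    (hnd : (p.map Prod.fst).Nodup) : ∀ e ∈ p.dropLast, e.2.2 ≠ a := by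
  rw [h.map_fst hp, List.nodup_cons] at hnd
  exact fun e he hea => hnd.1 (List.mem_map.mpr ⟨e, he, hea⟩)

lemma FPath.getElem_succ_fst (h : P.FPath a p b) {t : ℕ} (ht : t + 1 < p.length) :
    p[t + 1].1 = p[t].2.2 := by
  have hmap := congrArg (·[t + 1]?) (h.map_fst (List.ne_nil_of_length_pos (by omega)))
  simp only [List.getElem?_map, List.getElem?_cons_succ, List.getElem?_eq_getElem ht,
    List.getElem?_eq_getElem (show t < p.dropLast.length by simp; omega),
    List.getElem_dropLast, Option.map_some, Option.some.injEq] at hmap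
  exact hmap

lemma FPath.take_drop_fst (h : P.FPath a p b) {m : ℕ} (hm : m < p.length) :
    P.FPath a (p.take m) p[m].1 ∧ P.FPath p[m].1 (p.drop m) b := by
  obtain ⟨x, h1, h2⟩ := (show P.FPath a (p.take m ++ p.drop m) b by simpa using h).of_append
  rw [List.drop_eq_getElem_cons hm] at h2 ⊢
  obtain ⟨rfl, -, -⟩ := h2.of_cons
  exact ⟨h1, h2⟩

lemma FPath.take_drop_snd_snd (h : P.FPath a p b) {m : ℕ} (hm0 : 0 < m) (hm : m ≤ p.length) :
    P.FPath a (p.take m) p[m - 1].2.2 ∧ P.FPath p[m - 1].2.2 (p.drop m) b := by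
  obtain ⟨x, h1, h2⟩ := (show P.FPath a (p.take m ++ p.drop m) b by simpa using h).of_append
  have hne : p.take m ≠ [] := List.ne_nil_of_length_pos (by simp; omega)
  have hx := h1.getLast_snd_snd hne
  rw [List.getLast_eq_getElem, List.getElem_take] at hx
  simp only [List.length_take, Nat.min_eq_left hm] at hx
  rw [hx]
  exact ⟨h1, h2⟩

lemma FPath.exists_cycle_of_not_nodup (h : P.FPath a p b) (hnd : ¬ (p.map Prod.fst).Nodup) :
    ∃ A B C x, p = A ++ B ++ C ∧ B ≠ [] ∧ C ≠ [] ∧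
      P.FPath a A x ∧ P.FPath x B x ∧ P.FPath x C b := by
  induction h with
  | nil => simp at hnd
  | @cons a b' c d p he h' ih =>
    rw [List.map_cons, List.nodup_cons, not_and_or, not_not] at hnd
    rcases hnd with hmem | hnd
    · obtain ⟨e', he', rfl⟩ := List.mem_map.mp hmem
      obtain ⟨u, w, rfl⟩ := List.append_of_mem he'
      obtain ⟨y, hu, hw⟩ := h'.of_append
      obtain ⟨rfl, -, -⟩ := hw.of_cons
      exact ⟨[], (e'.1, d, b') :: u, e' :: w, e'.1, by simp, by simp, by simp, .nil _,
        .cons he hu, hw⟩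
    · obtain ⟨A, B, C, x, rfl, hB, hC, hA, hBx, hCx⟩ := ih hnd
      exact ⟨(a, d, b') :: A, B, C, x, rfl, hB, hC, .cons he hA, hBx, hCx⟩

end Paths

@[simp] lemma contractUpd_nil : contractUpd ([] : List (VEdge n L)) = 0 := rfl

@[simp] lemma contractUpd_cons (e : VEdge n L) (p : List (VEdge n L)) :
    contractUpd (e :: p) = e.2.1 + contractUpd p := by
  simp [contractUpd]

@[simp] lemma contractUpd_append (p q : List (VEdge n L)) :
    contractUpd (p ++ q) = contractUpd p + contractUpd q := by
  simp [contractUpd]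

section Cycles

variable {l0 : L} {j : Fin n}

lemma mem_naturalLoop_of_fPath {e : VEdge n L} (hbe : P.BackEdge l0 e) {x : L}
    {w : List (VEdge n L)} (hw : P.FPath x w e.1) (havoid : ∀ e' ∈ w, e'.2.2 ≠ e.2.2) :
    x ∈ P.NaturalLoop l0 e.2.2 := by
  refine ⟨fun q hq => ?_, e, hbe, rfl, w, hw, havoid⟩
  rcases hbe.2 (q ++ w) (hq.append hw) with h | ⟨e', he', ht⟩
  · exact .inl h
  · rcases List.mem_append.mp he' with h | h
    · exact .inr ⟨e', h, ht⟩
    · exact absurd ht (havoid e' h)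

lemma loopPath_of_backEdge {e : VEdge n L} (hbe : P.BackEdge l0 e) {r : List (VEdge n L)}
    (hr : P.FPath e.2.2 r e.1) (hnd : ((r ++ [e]).map Prod.fst).Nodup) :
    P.LoopPath l0 e.2.2 (r ++ [e]) := by
  have hc : P.FPath e.2.2 (r ++ [e]) e.2.2 := hr.append (.singleton hbe.1)
  have havoid : ∀ e' ∈ r, e'.2.2 ≠ e.2.2 := by
    simpa using hc.snd_snd_ne_of_nodup (by simp) hnd
  refine ⟨⟨e, hbe, rfl⟩, hc, by simp, hnd, ?_⟩
  rintro x (rfl | ⟨e', he', rfl⟩)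
  · exact mem_naturalLoop_of_fPath hbe hr havoid
  · rcases List.mem_append.mp he' with he' | he'
    · obtain ⟨u, w, rfl⟩ := List.append_of_mem he'
      obtain ⟨y, -, hw⟩ := hr.of_append
      obtain ⟨rfl, -, hw⟩ := hw.of_cons
      exact mem_naturalLoop_of_fPath hbe hw fun e'' he'' => havoid e'' (by simp [he''])
    · rw [List.mem_singleton.mp he']
      exact mem_naturalLoop_of_fPath hbe hr havoid

/-- In a reducible VASS every cycle is assembled from loop-paths: rotate it to end with a back
edge, which exists by reducibility; the result is a loop-path unless it leaves some location
twice, and then it splits into two shorter cycles. -/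
theorem FPath.contractUpd_nonpos (hred : P.Reducible l0)
    (hmono : ∀ (π' : List (VEdge n L)) (l' : L), P.LoopPath l0 l' π' → contractUpd π' j ≤ 0)
    {b : L} {p : List (VEdge n L)} (h : P.FPath b p b) : contractUpd p j ≤ 0 := by
  induction hlen : p.length using Nat.strong_induction_on generalizing p b with
  | _ N ih =>
  by_cases hbe : ∀ e ∈ p, ¬ P.BackEdge l0 e
  · simp [hred b p hbe h]
  push Not at hbe
  obtain ⟨e, he, hbe⟩ := hbe
  obtain ⟨p1, p2, rfl⟩ := List.append_of_mem he
  obtain ⟨x, h1, h2⟩ := (show P.FPath b ((p1 ++ [e]) ++ p2) b by simpa using h).of_append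
  obtain rfl : x = e.2.2 := by simpa using (h1.getLast_snd_snd (by simp)).symm
  have hrot : P.FPath e.2.2 (p2 ++ p1 ++ [e]) e.2.2 := by simpa using h2.append h1
  have hsum : contractUpd (p1 ++ e :: p2) j = contractUpd (p2 ++ p1 ++ [e]) j := by
    simp only [contractUpd_append, contractUpd_cons, contractUpd_nil, Pi.add_apply, Pi.zero_apply]
    ring
  have hlen' : (p2 ++ p1 ++ [e]).length = N := by simp at hlen ⊢; omega
  rw [hsum]
  by_cases hnd : ((p2 ++ p1 ++ [e]).map Prod.fst).Nodup
  · obtain ⟨y, hr, he1⟩ := hrot.of_append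
    obtain ⟨rfl, -, -⟩ := he1.of_cons
    exact hmono _ _ (loopPath_of_backEdge hbe hr hnd)
  · obtain ⟨A, B, C, y, hABC, hB, hC, hA, hBy, hCy⟩ := hrot.exists_cycle_of_not_nodup hnd
    rw [hABC] at hlen' ⊢
    have hB0 : 0 < B.length := List.length_pos_iff.mpr hB
    have hC0 : 0 < C.length := List.length_pos_iff.mpr hC
    have hBle := ih B.length (by simp at hlen'; omega) hBy rfl
    have hACle := ih (A ++ C).length (by simp at hlen' ⊢; omega) (hA.append hCy) rfl
    simp only [contractUpd_append, Pi.add_apply] at hACle ⊢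
    linarith

end Cycles

section Instances

variable {h l : L} {j : Fin n} {π ν : List (VEdge n L)} {D : Set ℕ}

lemma InstanceAux.ne_nil (hI : P.InstanceAux h π ν D) : ν ≠ [] := by
  cases hI <;> simp

lemma InstanceAux.exists_eq_cons {e : VEdge n L} {rest : List (VEdge n L)}
    (hI : P.InstanceAux h (e :: rest) ν D) : ∃ ν', ν = e :: ν' := by
  cases hI with
  | single => exact ⟨[], rfl⟩
  | cons => exact ⟨_, rfl⟩

lemma InstanceAux.getLast?_eq (hI : P.InstanceAux h π ν D) : ν.getLast? = π.getLast? := by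
  induction hI with
  | single => rfl
  | cons e q rest ν D _ _ _ hI ih =>
    rw [← List.cons_append, List.getLast?_append_of_ne_nil _ hI.ne_nil, ih]
    cases hI with
    | single => rfl
    | cons => rfl

lemma InstanceAux.snd_snd_ne (hI : P.InstanceAux h π ν D) : ∀ e ∈ ν.dropLast, e.2.2 ≠ h := by
  induction hI with
  | single => simp
  | cons e q rest ν D _ he hq hI ih =>
    rw [← List.cons_append, List.dropLast_append_of_ne_nil hI.ne_nil]
    simp only [List.mem_append, List.mem_cons]
    rintro e' ((rfl | he') | he')
    · exact he
    · exact hq e' he'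
    · exact ih e' he'

lemma InstanceAux.contractUpd_le (hI : P.InstanceAux h π ν D)
    (hcyc : ∀ (a : L) (q : List (VEdge n L)), P.FPath a q a → contractUpd q j ≤ 0) :
    contractUpd ν j ≤ contractUpd π j := by
  induction hI with
  | single => rfl
  | cons e q rest ν D hq _ _ _ ih =>
    have := hcyc _ q hq
    simp only [contractUpd_cons, contractUpd_append, Pi.add_apply]
    linarith

lemma IsInstance.getElem_zero_fst (hπ : P.FPath l π l) (hν : P.IsInstance π ν D)
    (h0 : 0 < ν.length) : ν[0].1 = l := by
  obtain ⟨e, rest, rfl, hI⟩ := hν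
  obtain ⟨ν', rfl⟩ := hI.exists_eq_cons
  exact hπ.of_cons.1

lemma IsInstance.getElem_snd_snd_eq_iff (hπ : P.FPath l π l) (hν : P.IsInstance π ν D)
    {t : ℕ} (ht : t < ν.length) : ν[t].2.2 = l ↔ t + 1 = ν.length := by
  obtain ⟨e, rest, rfl, hI⟩ := hν
  obtain ⟨rfl, -, -⟩ := hπ.of_cons
  constructor
  · intro hl
    by_contra hne
    have hmem := List.getElem_mem (l := ν.dropLast) (n := t) (by simp; omega)
    rw [List.getElem_dropLast] at hmem
    exact hI.snd_snd_ne _ hmem hl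
  · intro hlen
    have hlast := hI.getLast?_eq
    rw [List.getLast?_eq_some_getLast hI.ne_nil, List.getLast?_eq_some_getLast (by simp),
      Option.some.injEq, List.getLast_eq_getElem] at hlast
    simp only [← hlen, Nat.add_sub_cancel] at hlast
    rw [hlast]
    exact hπ.getLast_snd_snd _

end Instances

section InstanceAt

variable {l a b : L} {j : Fin n} {π p : List (VEdge n L)} {i k : ℕ}

lemma InstanceAt.getElem_fst (hπ : P.FPath l π l) (hI : P.InstanceAt π p i k)
    (hi : i < p.length) : p[i].1 = l := by
  obtain ⟨hik, hk, D, hν⟩ := hI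
  have := hν.getElem_zero_fst hπ (by simp; omega)
  simpa using this

lemma InstanceAt.getElem_snd_snd_eq_iff (hπ : P.FPath l π l) (hI : P.InstanceAt π p i k)
    {t : ℕ} (hit : i ≤ t) (hti : t < i + k) (ht : t < p.length) :
    p[t].2.2 = l ↔ t + 1 = i + k := by
  obtain ⟨hik, hk, D, hν⟩ := hI
  have := hν.getElem_snd_snd_eq_iff hπ (t := t - i) (by simp; omega)
  simp only [List.getElem_take, List.getElem_drop, Nat.add_sub_cancel' hit,
    List.length_take, List.length_drop] at this
  rw [this]
  omega

/-- Instances of `π` run between consecutive visits of the header `l`. -/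
lemma InstanceAt.eq_of_le_of_lt (hπ : P.FPath l π l) (hp : P.FPath a p b)
    (hI : P.InstanceAt π p i k) {i' k' : ℕ} (hI' : P.InstanceAt π p i' k')
    (hii' : i ≤ i') (hi' : i' < i + k) : i = i' ∧ k = k' := by
  have hik := hI.1
  have hik' := hI'.1
  obtain rfl : i = i' := by
    by_contra hne
    obtain ⟨t, rfl⟩ : ∃ t, i' = t + 1 := ⟨i' - 1, by omega⟩
    have hl : p[t].2.2 = l := by
      rw [← hp.getElem_succ_fst (by omega), hI'.getElem_fst hπ]
    have := (hI.getElem_snd_snd_eq_iff hπ (t := t) (by omega) (by omega) (by omega)).mp hl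
    omega
  have hle : ∀ k₁ k₂, P.InstanceAt π p i k₁ → P.InstanceAt π p i k₂ → k₂ ≤ k₁ := by
    intro k₁ k₂ h₁ h₂
    by_contra hlt
    have := h₁.2.1
    have := h₂.1
    have hl := (h₁.getElem_snd_snd_eq_iff hπ (t := i + k₁ - 1) (by omega) (by omega)
      (by omega)).mpr (by omega)
    have := (h₂.getElem_snd_snd_eq_iff hπ (by omega) (by omega) (by omega)).mp hl
    omega
  exact ⟨rfl, le_antisymm (hle k' k hI' hI) (hle k k' hI hI')⟩

lemma InstanceAt.drop_append (hI : P.InstanceAt π p i k) {m : ℕ} (hm : m ≤ i)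
    (q : List (VEdge n L)) : P.InstanceAt π (p.drop m ++ q) (i - m) k := by
  obtain ⟨hik, hk, D, hν⟩ := hI
  refine ⟨by simp; omega, hk, D, ?_⟩
  rwa [List.drop_append_of_le_length (by simp; omega), List.drop_drop, Nat.add_sub_cancel' hm,
    List.take_append_of_le_length (by simp; omega)]

lemma setOf_instanceAt_finite (π p : List (VEdge n L)) :
    {q : ℕ × ℕ | P.InstanceAt π p q.1 q.2}.Finite := by
  refine ((Set.finite_Iic p.length).prod (Set.finite_Iic p.length)).subset ?_
  rintro ⟨i, k⟩ ⟨hik, -, -⟩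
  simp only [Set.mem_prod, Set.mem_Iic]
  omega

lemma numInstances_eq_zero_or_exists_first (π p : List (VEdge n L)) :
    P.numInstances π p = 0 ∨
      ∃ i k, P.InstanceAt π p i k ∧ ∀ i' k', P.InstanceAt π p i' k' → i ≤ i' := by
  classical
  by_cases hex : ∃ i k, P.InstanceAt π p i k
  · obtain ⟨k, hk⟩ := Nat.find_spec hex
    exact .inr ⟨_, k, hk, fun i' k' hI' => Nat.find_min' hex ⟨k', hI'⟩⟩
  · refine .inl ?_
    rw [numInstances, Set.ncard_eq_zero (setOf_instanceAt_finite π p)]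
    exact Set.eq_empty_iff_forall_notMem.mpr fun q hq => hex ⟨q.1, q.2, hq⟩

/-- All other instances lie behind the first one, `(i, k)`, so they survive in the rotated
remainder. -/
lemma numInstances_le_numInstances_rotate_add_one (hπ : P.FPath l π l)
    (hp : P.FPath a p b) (hI : P.InstanceAt π p i k)
    (hmin : ∀ i' k', P.InstanceAt π p i' k' → i ≤ i') :
    P.numInstances π p ≤ P.numInstances π (p.drop (i + k) ++ p.take i) + 1 := by
  have hafter : ∀ q ∈ {q : ℕ × ℕ | P.InstanceAt π p q.1 q.2} \ {(i, k)}, i + k ≤ q.1 := by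
    rintro ⟨i', k'⟩ ⟨hI', hne⟩
    by_contra hlt
    obtain ⟨rfl, rfl⟩ := hI.eq_of_le_of_lt hπ hp hI' (hmin i' k' hI') (by omega)
    exact hne rfl
  rw [numInstances, ← Set.ncard_sdiff_singleton_add_one (show (i, k) ∈ _ from hI)
    (setOf_instanceAt_finite π p)]
  refine Nat.add_le_add_right (Set.ncard_le_ncard_of_injOn (fun q => (q.1 - (i + k), q.2))
    ?_ ?_ (setOf_instanceAt_finite _ _)) 1
  · intro q hq
    exact hq.1.drop_append (hafter q hq) _
  · intro q hq q' hq' hqq'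
    have := hafter q hq
    have := hafter q' hq'
    simp only [Prod.mk.injEq] at hqq'
    exact Prod.ext (by omega) hqq'.2

theorem FPath.contractUpd_le_mul_numInstances
    (hcyc : ∀ (a : L) (q : List (VEdge n L)), P.FPath a q a → contractUpd q j ≤ 0)
    (hp : P.FPath b p b) (hπ : P.FPath l π l) :
    contractUpd p j ≤ contractUpd π j * P.numInstances π p := by
  induction hlen : p.length using Nat.strong_induction_on generalizing p b with
  | _ N ih =>
  obtain h0 | ⟨i, k, hI, hmin⟩ := P.numInstances_eq_zero_or_exists_first π p
  · simpa [h0] using hcyc b p hp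
  obtain ⟨hik, hk, D, e, rest, hπe, hν⟩ := id hI
  have hA := (hp.take_drop_fst (m := i) (by omega)).1
  have hC := (hp.take_drop_snd_snd (m := i + k) (by omega) hik).2
  rw [hI.getElem_fst hπ] at hA
  rw [(hI.getElem_snd_snd_eq_iff hπ (t := i + k - 1) (by omega) (by omega) (by omega)).mpr
    (by omega)] at hC
  have hsplit : contractUpd p j
      = contractUpd ((p.drop i).take k) j + contractUpd (p.drop (i + k) ++ p.take i) j := by
    conv_lhs => rw [← List.take_append_drop i p, ← List.take_append_drop k (p.drop i),
      List.drop_drop]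
    simp only [contractUpd_append, Pi.add_apply]
    ring
  have hseg : contractUpd ((p.drop i).take k) j ≤ contractUpd π j :=
    hπe ▸ hν.contractUpd_le hcyc
  have hrest := ih _ (by simp; omega) (hC.append hA) rfl
  have hcount := numInstances_le_numInstances_rotate_add_one hπ hp hI hmin
  calc contractUpd p j
      ≤ contractUpd π j + contractUpd π j * P.numInstances π (p.drop (i + k) ++ p.take i) := by
        rw [hsplit]; exact add_le_add hseg hrest
    _ = contractUpd π j * ↑(P.numInstances π (p.drop (i + k) ++ p.take i) + 1) := by
        push_cast; ring
    _ ≤ contractUpd π j * P.numInstances π p :=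
        mul_le_mul_of_nonpos_left (by exact_mod_cast hcount) (hcyc l π hπ)

end InstanceAt

lemma FinTraceVals.le_add_contractUpd_take {p : List (VEdge n L)} {vals : ℕ → Valu n}
    (htr : P.FinTraceVals p vals) (j : Fin n) {m : ℕ} (hm : m ≤ p.length) :
    (vals m j : ℤ) ≤ vals 0 j + contractUpd (p.take m) j := by
  induction m with
  | zero => simp
  | succ m ih =>
    have hstep := htr m (by omega) j
    rw [List.get_eq_getElem] at hstep
    rw [List.take_succ_eq_append_getElem (by omega)]
    simp only [contractUpd_append, contractUpd_cons, contractUpd_nil, Pi.add_apply,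
      Pi.zero_apply]
    linarith [ih (by omega)]

end VASS

theorem base_case_path_bound_general
    {n : ℕ} {L : Type*} (P : VASS n L) (l0 : L)
    (hred : P.Reducible l0)
    (π : List (VEdge n L)) (l : L) (hπ : P.LoopPath l0 l π)
    (j : Fin n) (k : ℤ) (hk : 0 < k)
    (hdec : VASS.contractUpd π j = -k)
    (hmono : ∀ (π' : List (VEdge n L)) (l' : L), P.LoopPath l0 l' π' →
      VASS.contractUpd π' j ≤ 0)
    (σ0 : Valu n) (vals : ℕ → Valu n) (hv0 : vals 0 = σ0)
    (p : List (VEdge n L)) (hp : P.FPath l0 p l0)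
    (htr : P.FinTraceVals p vals) :
    (P.numInstances π p : ℚ) ≤ (σ0 j : ℚ) / (k : ℚ) := by
  have hcyc : ∀ (a : L) (q : List (VEdge n L)), P.FPath a q a → VASS.contractUpd q j ≤ 0 :=
    fun _ _ hq => hq.contractUpd_nonpos hred hmono
  have hcount : VASS.contractUpd p j ≤ -k * P.numInstances π p :=
    hdec ▸ hp.contractUpd_le_mul_numInstances hcyc hπ.2.1
  have htrace := htr.le_add_contractUpd_take j le_rfl
  rw [List.take_length, hv0] at htrace
  have hkey : (P.numInstances π p : ℤ) * k ≤ σ0 j := by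
    linarith [(vals p.length j).cast_nonneg (α := ℤ)]
  rw [le_div_iff₀ (by exact_mod_cast hk)]
  exact_mod_cast hkey

/-- Let `P` be a reducible VASS whose control flow graph is a single SCC
with unique entry (and exit) location `l0`.  Let `π` be a loop-path whose contracted update
decreases variable `x_j` by `k > 0` while no loop-path of `P` increases `x_j`.  Then every
finite trace of `P` from `(l0, σ0)` back to `l0` contains at most `σ0(x_j)/k` instances
of `π`. -/
theorem base_case_path_bound
    {n : ℕ} {L : Type*} [Finite L] (P : VASS n L) (l0 : L)
    (hEfin : P.E.Finite)
    (hreach : ∀ x, ∃ p, P.FPath l0 p x)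
    (hcoreach : ∀ x, ∃ p, P.FPath x p l0)
    (hred : P.Reducible l0)
    (π : List (VEdge n L)) (l : L) (hπ : P.LoopPath l0 l π)
    (j : Fin n) (k : ℤ) (hk : 0 < k)
    (hdec : VASS.contractUpd π j = -k)
    (hmono : ∀ (π' : List (VEdge n L)) (l' : L), P.LoopPath l0 l' π' →
      VASS.contractUpd π' j ≤ 0)
    (σ0 : Valu n) (vals : ℕ → Valu n) (hv0 : vals 0 = σ0)
    (p : List (VEdge n L)) (hp : P.FPath l0 p l0)
    (htr : P.FinTraceVals p vals) :
    (P.numInstances π p : ℚ) ≤ (σ0 j : ℚ) / (k : ℚ) :=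
  base_case_path_bound_general P l0 hred π l hπ j k hk hdec hmono σ0 vals hv0 p hp htr
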